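/- The 3×3 real matrix M(P2) = (1/(2(m+1)α)) · [[−2(m−1), (m−1)², 0], [2(m+1)α−2, −2β(m+1)−(m+3), −2(m+1)α], [0, 0, (σ−2)(m−1)]] has characteristic polynomial (x − λ3)(x² + b x + c) with λ3 = (σ−2)(m−1)/(2(m+1)α) > 0, c = (m−1)/(2(m+1)α²) > 0, and b > 0; in particular λ3 is a positive eigenvalue and the other two eigenvalues have negative real parts. -/
import Mathlib


open Real Set Filter Topology

/-- The self-similar exponent `α = (σ+2)/((σ-2)(m-1))`. -/
noncomputable def ssAlpha (m σ : ℝ) : ℝ := (σ + 2) / ((σ - 2) * (m - 1))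

/-- The self-similar exponent `β = 2/(σ-2)`. -/
noncomputable def ssBeta (σ : ℝ) : ℝ := 2 / (σ - 2)

/-- `(X,Y,Z)` satisfies the quadratic system (S) at time `η`:
`X' = X((m−1)Y − 2X)`, `Y' = −Y² − (β/α)Y + X − XY − Z`, `Z' = (σ−2)XZ`. -/
def SysAt (m σ : ℝ) (X Y Z : ℝ → ℝ) (η : ℝ) : Prop :=
  HasDerivAt X (X η * ((m - 1) * Y η - 2 * X η)) η ∧
  HasDerivAt Y (-(Y η) ^ 2 - ssBeta σ / ssAlpha m σ * Y η + X η - X η * Y η - Z η) η ∧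
  HasDerivAt Z ((σ - 2) * X η * Z η) η

/-- The equilibrium `P0^λ = (0, λ, −λ² − (β/α)λ)` on the critical parabola. -/
noncomputable def P0pt (m σ l : ℝ) : ℝ × ℝ × ℝ :=
  (0, l, -l ^ 2 - ssBeta σ / ssAlpha m σ * l)

/-- The equilibrium `P2 = ((m−1)/(2(m+1)α), 1/((m+1)α), 0)`. -/
noncomputable def P2pt (m σ : ℝ) : ℝ × ℝ × ℝ :=
  ((m - 1) / (2 * (m + 1) * ssAlpha m σ), 1 / ((m + 1) * ssAlpha m σ), 0)

/-- The linearization of (S) at the equilibrium `P2`. -/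
noncomputable def MP2 (m σ : ℝ) : Matrix (Fin 3) (Fin 3) ℝ :=
  (1 / (2 * (m + 1) * ssAlpha m σ)) •
    !![-2 * (m - 1), (m - 1) ^ 2, 0;
       2 * (m + 1) * ssAlpha m σ - 2, -2 * ssBeta σ * (m + 1) - (m + 3),
         -2 * (m + 1) * ssAlpha m σ;
       0, 0, (σ - 2) * (m - 1)]

open Polynomial in
lemma charpoly_aux (a b d e f i : ℝ) :
    (!![a, b, 0; d, e, f; 0, 0, i] : Matrix (Fin 3) (Fin 3) ℝ).charpoly =
      (X - C i) * (X ^ 2 - C (a + e) * X + C (a * e - b * d)) := by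
  rw [Matrix.charpoly, Matrix.det_fin_three]
  simp [Matrix.charmatrix_apply, Matrix.diagonal_apply]
  ring

lemma MP2_eq (m σ : ℝ) : MP2 m σ =
    !![(1 / (2 * (m + 1) * ssAlpha m σ)) * (-2 * (m - 1)),
       (1 / (2 * (m + 1) * ssAlpha m σ)) * (m - 1) ^ 2, 0;
       (1 / (2 * (m + 1) * ssAlpha m σ)) * (2 * (m + 1) * ssAlpha m σ - 2),
       (1 / (2 * (m + 1) * ssAlpha m σ)) * (-2 * ssBeta σ * (m + 1) - (m + 3)),
       (1 / (2 * (m + 1) * ssAlpha m σ)) * (-2 * (m + 1) * ssAlpha m σ);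
       0, 0, (1 / (2 * (m + 1) * ssAlpha m σ)) * ((σ - 2) * (m - 1))] := by
  ext i j
  fin_cases i <;> fin_cases j <;> simp [MP2]

lemma quad_neg_re (b c : ℝ) (hb : 0 < b) (hc : 0 < c) (z : ℂ)
    (h : z ^ 2 + (b : ℂ) * z + (c : ℂ) = 0) : z.re < 0 := by
  have h1 : (z ^ 2 + (b : ℂ) * z + (c : ℂ)).re = 0 := by rw [h]; simp
  have h2 : (z ^ 2 + (b : ℂ) * z + (c : ℂ)).im = 0 := by rw [h]; simp
  simp [pow_two, Complex.add_re, Complex.add_im, Complex.mul_re, Complex.mul_im,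
    Complex.ofReal_re, Complex.ofReal_im] at h1 h2
  rcases eq_or_ne z.im 0 with h0 | h0
  · rw [h0] at h1
    by_contra hge
    push_neg at hge
    nlinarith
  · have h3 : z.im * (2 * z.re + b) = 0 := by linarith [h2]
    have h4 : 2 * z.re + b = 0 := by
      rcases mul_eq_zero.1 h3 with h | h
      · exact absurd h h0
      · exact h
    linarith

open Polynomial in
/-- `M(P2)` has characteristic polynomial `(x − λ3)(x² + b x + c)` with
`λ3 = (σ−2)(m−1)/(2(m+1)α) > 0`, `c = (m−1)/(2(m+1)α²) > 0` and `b > 0`; in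
particular `λ3` is a positive eigenvalue and the two remaining eigenvalues have
negative real parts. -/
theorem charpoly_linearization_P2
    (m σ : ℝ) (hm1 : 1 < m) (hm2 : m < 2) (hσ : 2 < σ) :
    ∃ b : ℝ, 0 < b ∧
      (MP2 m σ).charpoly =
        (X - C ((σ - 2) * (m - 1) / (2 * (m + 1) * ssAlpha m σ))) *
          (X ^ 2 + C b * X + C ((m - 1) / (2 * (m + 1) * (ssAlpha m σ) ^ 2))) ∧
      0 < (σ - 2) * (m - 1) / (2 * (m + 1) * ssAlpha m σ) ∧
      0 < (m - 1) / (2 * (m + 1) * (ssAlpha m σ) ^ 2) ∧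
      ∀ z : ℂ,
        z ^ 2 + (b : ℂ) * z + (((m - 1) / (2 * (m + 1) * (ssAlpha m σ) ^ 2) : ℝ) : ℂ) = 0 →
        z.re < 0 := by
  have hm1' : (0:ℝ) < m - 1 := by linarith
  have hσ' : (0:ℝ) < σ - 2 := by linarith
  have hmp : (0:ℝ) < m + 1 := by linarith
  have hα : 0 < ssAlpha m σ := by
    unfold ssAlpha; positivity
  have hβ : 0 < ssBeta σ := by
    unfold ssBeta; positivity
  have hs : 0 < 1 / (2 * (m + 1) * ssAlpha m σ) := by positivity
  have hαne : ssAlpha m σ ≠ 0 := ne_of_gt hα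
  have hσne : σ - 2 ≠ 0 := ne_of_gt hσ'
  have hmne : m - 1 ≠ 0 := ne_of_gt hm1'
  have hmpne : m + 1 ≠ 0 := ne_of_gt hmp
  refine ⟨(1 / (2 * (m + 1) * ssAlpha m σ)) * (3 * m + 1 + 2 * ssBeta σ * (m + 1)),
    ?_, ?_, ?_, ?_, ?_⟩
  · have : 0 < 3 * m + 1 + 2 * ssBeta σ * (m + 1) := by nlinarith
    positivity
  · rw [MP2_eq, charpoly_aux]
    have h2 : (1 / (2 * (m + 1) * ssAlpha m σ)) * (-2 * (m - 1)) +
        (1 / (2 * (m + 1) * ssAlpha m σ)) * (-2 * ssBeta σ * (m + 1) - (m + 3)) =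
        -((1 / (2 * (m + 1) * ssAlpha m σ)) * (3 * m + 1 + 2 * ssBeta σ * (m + 1))) := by
      ring
    have h3 : (1 / (2 * (m + 1) * ssAlpha m σ)) * (-2 * (m - 1)) *
        ((1 / (2 * (m + 1) * ssAlpha m σ)) * (-2 * ssBeta σ * (m + 1) - (m + 3))) -
        (1 / (2 * (m + 1) * ssAlpha m σ)) * (m - 1) ^ 2 *
        ((1 / (2 * (m + 1) * ssAlpha m σ)) * (2 * (m + 1) * ssAlpha m σ - 2)) =
        (m - 1) / (2 * (m + 1) * (ssAlpha m σ) ^ 2) := by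
      unfold ssAlpha ssBeta
      field_simp
      ring
    have h1 : (1 / (2 * (m + 1) * ssAlpha m σ)) * ((σ - 2) * (m - 1)) =
        (σ - 2) * (m - 1) / (2 * (m + 1) * ssAlpha m σ) := by ring
    rw [h2, h3, h1, map_neg]
    ring
  · positivity
  · positivity
  · intro z hz
    refine quad_neg_re _ _ ?_ (by positivity) z hz
    have : 0 < 3 * m + 1 + 2 * ssBeta σ * (m + 1) := by nlinarith
    positivity
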